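/- Let C be a pointed closed convex cone in ℝⁿ with nonempty interior, let q > n, let Θ : C ∖ {0} → (0, ∞) be a continuous function homogeneous of degree −q, let 𝔸 be a C-asymptotic set, and let z ∈ C with z ≠ 0. Then ∫_{z+C} Θ dH^n and ∫_{z+𝔸} Θ dH^n are finite and the convolution formula holds: T_Θ(𝔸, z) = ∫_{(z+C) ∖ (z+𝔸)} Θ(x) dH^n(x) = ∫_{z+C} Θ(x) dH^n(x) − ∫_{z+𝔸} Θ(x) dH^n(x), where ∫_{z+C} Θ dH^n equals the convolution (𝟙_{−C} ∗ Θ)(z) = ∫_{ℝⁿ} 𝟙_{−C}(z − x) Θ(x) dH^n(x). -/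

import Mathlib

open Set MeasureTheory Metric Bornology
open scoped InnerProductSpace ENNReal NNReal Pointwise

noncomputable section

/-- A pointed closed convex cone with nonempty interior in `ℝⁿ`. -/
def IsPointedClosedConvexCone {n : ℕ} (C : Set (EuclideanSpace ℝ (Fin n))) : Prop :=
  IsClosed C ∧ Convex ℝ C ∧ (interior C).Nonempty ∧
    (∀ l : ℝ, 0 ≤ l → ∀ x ∈ C, l • x ∈ C) ∧ C ∩ (-C) = {0}

/-- The recession cone of a set. -/
def recCone {n : ℕ} (E : Set (EuclideanSpace ℝ (Fin n))) : Set (EuclideanSpace ℝ (Fin n)) :=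
  {x | ∀ y ∈ E, y + x ∈ E}

/-- A pseudo-cone: a nonempty closed convex set not containing the origin, closed under
dilations by factors `≥ 1`. -/
def IsPseudoCone {n : ℕ} (E : Set (EuclideanSpace ℝ (Fin n))) : Prop :=
  E.Nonempty ∧ IsClosed E ∧ Convex ℝ E ∧ (0 : EuclideanSpace ℝ (Fin n)) ∉ E ∧
    ∀ l : ℝ, 1 ≤ l → ∀ x ∈ E, l • x ∈ E

/-- A `C`-pseudo-cone: a pseudo-cone contained in `C` with recession cone `C`. -/
def IsCPseudoCone {n : ℕ} (C E : Set (EuclideanSpace ℝ (Fin n))) : Prop :=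
  IsPseudoCone E ∧ E ⊆ C ∧ recCone E = C

/-- The polar cone of `C`. -/
def polarCone {n : ℕ} (C : Set (EuclideanSpace ℝ (Fin n))) : Set (EuclideanSpace ℝ (Fin n)) :=
  {y | ∀ x ∈ C, ⟪x, y⟫_ℝ ≤ 0}

/-- The support function of a set. -/
def suppFn {n : ℕ} (E : Set (EuclideanSpace ℝ (Fin n))) (v : EuclideanSpace ℝ (Fin n)) : ℝ :=
  sSup ((fun x => ⟪x, v⟫_ℝ) '' E)

/-- A `C`-asymptotic set: an unbounded closed convex subset of `C` avoiding the origin whose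
boundary is asymptotic to the boundary of `C` at infinity. -/
def IsCAsymptotic {n : ℕ} (C A : Set (EuclideanSpace ℝ (Fin n))) : Prop :=
  A ⊆ C ∧ (0 : EuclideanSpace ℝ (Fin n)) ∉ A ∧ IsClosed A ∧ Convex ℝ A ∧
    ¬ IsBounded A ∧
    ∀ ε > 0, ∃ R > 0, ∀ x ∈ frontier A, R ≤ ‖x‖ → infDist x (frontier C) < ε

/-- The radial function of a set. -/
def radialFn {n : ℕ} (E : Set (EuclideanSpace ℝ (Fin n))) (u : EuclideanSpace ℝ (Fin n)) : ℝ :=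
  sInf {r : ℝ | 0 < r ∧ r • u ∈ E}

/-!
Homogeneity bounds `Θ` by `M ‖x‖ ^ (-q)` on `C \ {0}`, where `M` bounds `Θ` on the compact set
`C ∩ sphere 0 1`. As `z ≠ 0` and `C` is pointed, the closed set `z + C` stays a positive distance
`δ` away from the origin, and there `‖x‖ ^ (-q) ≤ (1 + δ⁻¹) ^ q (1 + ‖x‖) ^ (-q)`, which is
integrable because `q > n`. The two identities are then bookkeeping: `z + A ⊆ z + C` for the
difference, and `z + C = {x | z - x ∈ -C}` for the convolution.
-/

section ConvexCone

variable {E : Type*} [AddCommGroup E] {C : Set E}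

theorem add_mem_of_convex_of_smul_mem [Module ℝ E] (hconv : Convex ℝ C)
    (hsmul : ∀ l : ℝ, 0 ≤ l → ∀ x ∈ C, l • x ∈ C) {a b : E} (ha : a ∈ C) (hb : b ∈ C) :
    a + b ∈ C := by
  have hmid : (1 / 2 : ℝ) • a + (1 / 2 : ℝ) • b ∈ C :=
    hconv ha hb (by norm_num) (by norm_num) (by norm_num)
  have h := hsmul 2 (by norm_num) _ hmid
  rwa [smul_add, smul_smul, smul_smul, show (2 : ℝ) * (1 / 2) = 1 by norm_num, one_smul,
    one_smul] at h

theorem image_add_left_subset_diff_zero (hadd : ∀ a ∈ C, ∀ b ∈ C, a + b ∈ C)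
    (hpt : C ∩ -C = {0}) {z : E} (hz : z ∈ C) (hz0 : z ≠ 0) :
    (fun x => z + x) '' C ⊆ C \ {0} := by
  rintro _ ⟨y, hy, rfl⟩
  refine ⟨hadd z hz y hy, fun hzero => hz0 ?_⟩
  have hy_eq : y = -z := eq_neg_of_add_eq_zero_right hzero
  have hz_mem : z ∈ C ∩ -C := ⟨hz, by rwa [Set.mem_neg, ← hy_eq]⟩
  rwa [hpt] at hz_mem

end ConvexCone

theorem Real.rpow_neg_le_mul_one_add_rpow_neg {δ r q : ℝ} (hδ : 0 < δ) (hr : δ ≤ r)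
    (hq : 0 ≤ q) : r ^ (-q) ≤ (1 + δ⁻¹) ^ q * (1 + r) ^ (-q) := by
  have hr0 : 0 < r := hδ.trans_le hr
  have hc : 0 < 1 + δ⁻¹ := by positivity
  have hle : 1 + r ≤ (1 + δ⁻¹) * r := by
    have : 1 ≤ δ⁻¹ * r := by rwa [inv_mul_eq_div, le_div_iff₀ hδ, one_mul]
    linarith
  calc r ^ (-q) = (1 + δ⁻¹) ^ q * ((1 + δ⁻¹) * r) ^ (-q) := by
        rw [Real.mul_rpow hc.le hr0.le, ← mul_assoc, ← Real.rpow_add hc, add_neg_cancel,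
          Real.rpow_zero, one_mul]
    _ ≤ (1 + δ⁻¹) ^ q * (1 + r) ^ (-q) :=
        mul_le_mul_of_nonneg_left (Real.rpow_le_rpow_of_nonpos (by positivity) hle
          (neg_nonpos.mpr hq)) (by positivity)

section Homogeneous

variable {E : Type*} [NormedAddCommGroup E] [NormedSpace ℝ E]

theorem exists_le_mul_norm_rpow_of_homogeneous [ProperSpace E] {C : Set E} (hC : IsClosed C)
    (hsmul : ∀ l : ℝ, 0 ≤ l → ∀ x ∈ C, l • x ∈ C) {Θ : E → ℝ} {q : ℝ}
    (hcont : ContinuousOn Θ (C \ {0}))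
    (hhom : ∀ l : ℝ, 0 < l → ∀ x ∈ C \ {0}, Θ (l • x) = l ^ (-q) * Θ x) :
    ∃ M, 0 ≤ M ∧ ∀ x ∈ C \ {0}, Θ x ≤ M * ‖x‖ ^ (-q) := by
  set K := C ∩ sphere (0 : E) 1
  have hK : K ⊆ C \ {0} := fun u hu =>
    ⟨hu.1, fun h => by simp [K, show u = 0 from h] at hu⟩
  obtain ⟨M, hM⟩ := ((isCompact_sphere _ _).inter_left hC).bddAbove_image (hcont.mono hK)
  refine ⟨max M 0, le_max_right _ _, fun x hx => ?_⟩
  have hx0 : 0 < ‖x‖ := norm_pos_iff.mpr hx.2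
  set u := ‖x‖⁻¹ • x
  have huK : u ∈ K :=
    ⟨hsmul _ (by positivity) x hx.1, by simp [u, norm_smul, hx0.ne']⟩
  have hxu : x = ‖x‖ • u := by simp [u, smul_smul, hx0.ne']
  calc Θ x = ‖x‖ ^ (-q) * Θ u := by rw [← hhom _ hx0 u (hK huK), ← hxu]
    _ ≤ ‖x‖ ^ (-q) * max M 0 :=
        mul_le_mul_of_nonneg_left ((hM ⟨u, huK, rfl⟩).trans (le_max_left _ _)) (by positivity)
    _ = max M 0 * ‖x‖ ^ (-q) := mul_comm _ _

theorem setLIntegral_ofReal_lt_top_of_le_mul_norm_rpow [MeasurableSpace E] [BorelSpace E]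
    [FiniteDimensional ℝ E] (μ : Measure E) [μ.IsAddHaarMeasure] {S : Set E} (hS : IsClosed S)
    (h0 : (0 : E) ∉ S) {f : E → ℝ} {M q : ℝ} (hM : 0 ≤ M)
    (hq : (Module.finrank ℝ E : ℝ) < q) (hf : ∀ x ∈ S, f x ≤ M * ‖x‖ ^ (-q)) :
    ∫⁻ x in S, ENNReal.ofReal (f x) ∂μ < ⊤ := by
  obtain ⟨δ, hδ, hball⟩ := Metric.mem_nhds_iff.mp (hS.isOpen_compl.mem_nhds h0)
  have hδS : ∀ x ∈ S, δ ≤ ‖x‖ := fun x hx => by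
    by_contra! h
    exact hball (mem_ball_zero_iff.mpr h) hx
  have hq0 : 0 ≤ q := (Nat.cast_nonneg _).trans hq.le
  set K := M * (1 + δ⁻¹) ^ q
  have hfK : ∀ x ∈ S, f x ≤ K * (1 + ‖x‖) ^ (-q) := fun x hx =>
    calc f x ≤ M * ‖x‖ ^ (-q) := hf x hx
      _ ≤ M * ((1 + δ⁻¹) ^ q * (1 + ‖x‖) ^ (-q)) := by
          gcongr
          exact Real.rpow_neg_le_mul_one_add_rpow_neg hδ (hδS x hx) hq0
      _ = K * (1 + ‖x‖) ^ (-q) := by ring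
  calc ∫⁻ x in S, ENNReal.ofReal (f x) ∂μ
      ≤ ∫⁻ x in S, ENNReal.ofReal (K * (1 + ‖x‖) ^ (-q)) ∂μ :=
        setLIntegral_mono' hS.measurableSet fun x hx => ENNReal.ofReal_le_ofReal (hfK x hx)
    _ ≤ ∫⁻ x, ENNReal.ofReal (K * (1 + ‖x‖) ^ (-q)) ∂μ := setLIntegral_le_lintegral _ _
    _ = ENNReal.ofReal K * ∫⁻ x, ENNReal.ofReal ((1 + ‖x‖) ^ (-q)) ∂μ := by
        simp_rw [ENNReal.ofReal_mul (by positivity : 0 ≤ K)]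
        exact lintegral_const_mul' _ _ ENNReal.ofReal_ne_top
    _ < ⊤ := ENNReal.mul_lt_top ENNReal.ofReal_lt_top (finite_integral_one_add_norm hq)

end Homogeneous

theorem setLIntegral_diff_eq_sub {α : Type*} [MeasurableSpace α] {μ : Measure α}
    {f : α → ℝ≥0∞} {S T : Set α} (hT : MeasurableSet T) (hTS : T ⊆ S)
    (hfin : ∫⁻ x in T, f x ∂μ ≠ ⊤) :
    ∫⁻ x in S \ T, f x ∂μ = ∫⁻ x in S, f x ∂μ - ∫⁻ x in T, f x ∂μ := by
  rw [← lintegral_inter_add_sdiff f S hT, inter_eq_right.mpr hTS,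
    ENNReal.add_sub_cancel_left hfin]

theorem setLIntegral_image_add_left_eq_lintegral_indicator_neg {E : Type*} [AddCommGroup E]
    [MeasurableSpace E] {μ : Measure E} {C : Set E} {z : E}
    (hC : MeasurableSet ((fun x => z + x) '' C)) (Θ : E → ℝ) :
    ∫⁻ x in (fun x => z + x) '' C, ENNReal.ofReal (Θ x) ∂μ
      = ∫⁻ x, ENNReal.ofReal ((-C).indicator (fun _ => (1 : ℝ)) (z - x) * Θ x) ∂μ := by
  rw [← lintegral_indicator hC]
  congr 1 with x
  have hmem : z - x ∈ -C ↔ x ∈ (fun x => z + x) '' C := by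
    rw [Set.image_add_left, Set.mem_neg, Set.mem_preimage, neg_sub, sub_eq_neg_add]
  by_cases hx : x ∈ (fun x => z + x) '' C
  · rw [indicator_of_mem (hmem.mpr hx), indicator_of_mem hx, one_mul]
  · rw [indicator_of_notMem (mt hmem.mp hx), indicator_of_notMem hx, zero_mul,
      ENNReal.ofReal_zero]

theorem stmt14_general {n : ℕ} (C A : Set (EuclideanSpace ℝ (Fin n)))
    (hC : IsPointedClosedConvexCone C) (hA : IsCAsymptotic C A)
    (q : ℝ) (hq : (n : ℝ) < q) (Θ : EuclideanSpace ℝ (Fin n) → ℝ)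
    (hΘcont : ContinuousOn Θ (C \ {0}))
    (hΘhom : ∀ l : ℝ, 0 < l → ∀ x ∈ C \ {0}, Θ (l • x) = l ^ (-q) * Θ x)
    (z : EuclideanSpace ℝ (Fin n)) (hz : z ∈ C) (hz0 : z ≠ 0) :
    (∫⁻ x in (fun x => z + x) '' C, ENNReal.ofReal (Θ x) ∂volume < ⊤) ∧
    (∫⁻ x in (fun x => z + x) '' A, ENNReal.ofReal (Θ x) ∂volume < ⊤) ∧
    (∫⁻ x in ((fun x => z + x) '' C) \ ((fun x => z + x) '' A), ENNReal.ofReal (Θ x) ∂volume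
      = (∫⁻ x in (fun x => z + x) '' C, ENNReal.ofReal (Θ x) ∂volume)
        - ∫⁻ x in (fun x => z + x) '' A, ENNReal.ofReal (Θ x) ∂volume) ∧
    (∫⁻ x in (fun x => z + x) '' C, ENNReal.ofReal (Θ x) ∂volume
      = ∫⁻ x, ENNReal.ofReal ((-C).indicator (fun _ => (1 : ℝ)) (z - x) * Θ x) ∂volume) := by
  obtain ⟨hCcl, hCconv, -, hCsmul, hCpt⟩ := hC
  have hzC : IsClosed ((fun x => z + x) '' C) := (Homeomorph.addLeft z).isClosedMap C hCcl
  have hzA : IsClosed ((fun x => z + x) '' A) := (Homeomorph.addLeft z).isClosedMap A hA.2.2.1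
  have hAC : (fun x => z + x) '' A ⊆ (fun x => z + x) '' C := image_mono hA.1
  have hzC_sub : (fun x => z + x) '' C ⊆ C \ {0} :=
    image_add_left_subset_diff_zero (fun _ ha _ hb => add_mem_of_convex_of_smul_mem hCconv hCsmul
      ha hb) hCpt hz hz0
  obtain ⟨M, hM, hΘle⟩ := exists_le_mul_norm_rpow_of_homogeneous hCcl hCsmul hΘcont hΘhom
  have hfinC : ∫⁻ x in (fun x => z + x) '' C, ENNReal.ofReal (Θ x) ∂volume < ⊤ :=
    setLIntegral_ofReal_lt_top_of_le_mul_norm_rpow volume hzC (fun h => (hzC_sub h).2 rfl) hM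
      (by rwa [finrank_euclideanSpace_fin]) fun x hx => hΘle x (hzC_sub hx)
  have hfinA := (lintegral_mono_set hAC).trans_lt hfinC
  exact ⟨hfinC, hfinA, setLIntegral_diff_eq_sub hzA.measurableSet hAC hfinA.ne,
    setLIntegral_image_add_left_eq_lintegral_indicator_neg hzC.measurableSet Θ⟩

theorem stmt14 {n : ℕ} (hn : 2 ≤ n) (C A : Set (EuclideanSpace ℝ (Fin n)))
    (hC : IsPointedClosedConvexCone C) (hA : IsCAsymptotic C A)
    (q : ℝ) (hq : (n : ℝ) < q) (Θ : EuclideanSpace ℝ (Fin n) → ℝ)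
    (hΘpos : ∀ x ∈ C \ {0}, 0 < Θ x)
    (hΘcont : ContinuousOn Θ (C \ {0}))
    (hΘhom : ∀ l : ℝ, 0 < l → ∀ x ∈ C \ {0}, Θ (l • x) = l ^ (-q) * Θ x)
    (hΘzero : ∀ x, x ∉ C \ {0} → Θ x = 0)
    (z : EuclideanSpace ℝ (Fin n)) (hz : z ∈ C) (hz0 : z ≠ 0) :
    (∫⁻ x in (fun x => z + x) '' C, ENNReal.ofReal (Θ x) ∂volume < ⊤) ∧
    (∫⁻ x in (fun x => z + x) '' A, ENNReal.ofReal (Θ x) ∂volume < ⊤) ∧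
    (∫⁻ x in ((fun x => z + x) '' C) \ ((fun x => z + x) '' A), ENNReal.ofReal (Θ x) ∂volume
      = (∫⁻ x in (fun x => z + x) '' C, ENNReal.ofReal (Θ x) ∂volume)
        - ∫⁻ x in (fun x => z + x) '' A, ENNReal.ofReal (Θ x) ∂volume) ∧
    (∫⁻ x in (fun x => z + x) '' C, ENNReal.ofReal (Θ x) ∂volume
      = ∫⁻ x, ENNReal.ofReal ((-C).indicator (fun _ => (1 : ℝ)) (z - x) * Θ x) ∂volume) :=
  stmt14_general C A hC hA q hq Θ hΘcont hΘhom z hz hz0
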